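/- arXiv:1807.08997 — 4 statements merged into one kernel-verified Lean document; each statement's English description precedes it below -/
import Mathlib

section
/- Let α > 1/2, let a(x) = c_α (1+|x|²)^{-α} with c_α > 0 the constant making ∫_ℝ a = 1, and let u₀ ∈ L^∞_+(ℝ). Then there exist R > 0 and constants c₁, c₂ > 0 such that for all |x| ≥ R: c₁ |x|^{−2α} ≤ a(x) ≤ c₂ (a*u₀)(x). -/
/-!
For `|x| ≥ 1` one has `1 + |x|² ≤ 2|x|²`, which gives the lower bound. For the upper bound, once
`|x| ≥ |x₀| + δ` every `y` in the interval `[x₀ - δ, x₀ + δ]` where `u₀ ≥ δ` satisfies `|y| ≤ |x|`,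
so `|x - y| ≤ 2|x|` and `a (x - y) ≥ 4^{-α} a x`. Integrating over that interval of length `2δ`
gives `(a * u₀)(x) ≥ 2δ² 4^{-α} a x`; the convolution is finite because `a ∈ L¹` and `u₀ ∈ L^∞`.
-/

open MeasureTheory Real Set

theorem le_one_add_sq_rpow_neg_of_one_le_abs {α x : ℝ} (hα : 0 ≤ α) (hx : 1 ≤ |x|) :
    2 ^ (-α) * |x| ^ (-(2 * α)) ≤ (1 + |x| ^ 2) ^ (-α) := by
  have hsq : |x| ^ (-(2 * α)) = (|x| ^ 2) ^ (-α) := by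
    rw [← rpow_natCast, ← rpow_mul (abs_nonneg x)]
    ring_nf
  rw [hsq, ← mul_rpow (by norm_num) (by positivity)]
  exact rpow_le_rpow_of_nonpos (by positivity) (by nlinarith) (neg_nonpos.2 hα)

theorem four_rpow_neg_mul_le_one_add_sq_sub_rpow_neg {α x y : ℝ} (hα : 0 ≤ α) (hyx : |y| ≤ |x|) :
    4 ^ (-α) * (1 + |x| ^ 2) ^ (-α) ≤ (1 + |x - y| ^ 2) ^ (-α) := by
  have hxy : |x - y| ≤ 2 * |x| := by linarith [abs_sub x y]
  have hsq : |x - y| ^ 2 ≤ (2 * |x|) ^ 2 := pow_le_pow_left₀ (abs_nonneg _) hxy 2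
  rw [← mul_rpow (by norm_num) (by positivity)]
  exact rpow_le_rpow_of_nonpos (by positivity) (by nlinarith) (neg_nonpos.2 hα)

theorem integrable_one_add_sq_rpow_neg {α : ℝ} (hα : 1 / 2 < α) :
    Integrable (fun x : ℝ => (1 + |x| ^ 2) ^ (-α)) := by
  have h := integrable_rpow_neg_one_add_norm_sq (E := ℝ) (μ := volume) (r := 2 * α)
    (by simp only [Module.finrank_self, Nat.cast_one]; linarith)
  simpa only [Real.norm_eq_abs, neg_mul, neg_div, mul_div_cancel_left₀ α two_ne_zero] using h

theorem mul_measureReal_le_integral_mul {X : Type*} [MeasurableSpace X] {μ : Measure X}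
    {g f : X → ℝ} {s : Set X} {c δ : ℝ} (hg : Integrable g μ) (hf : MemLp f ⊤ μ)
    (hg0 : ∀ y, 0 ≤ g y) (hf0 : ∀ᵐ y ∂μ, 0 ≤ f y) (hs : MeasurableSet s) (hμs : μ s ≠ ⊤)
    (hδ : 0 ≤ δ) (hgs : ∀ y ∈ s, c ≤ g y) (hfs : ∀ᵐ y ∂μ, y ∈ s → δ ≤ f y) :
    c * δ * μ.real s ≤ ∫ y, g y * f y ∂μ := by
  have hgf : Integrable (fun y => g y * f y) μ := hg.mul_of_top_left hf
  calc c * δ * μ.real s = ∫ _ in s, c * δ ∂μ := by rw [setIntegral_const, smul_eq_mul, mul_comm]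
    _ ≤ ∫ y in s, g y * f y ∂μ := by
      refine setIntegral_mono_on_ae (integrableOn_const hμs) hgf.integrableOn hs ?_
      filter_upwards [hfs] with y hy hys
      exact mul_le_mul (hgs y hys) (hy hys) hδ (hg0 y)
    _ ≤ ∫ y, g y * f y ∂μ := by
      refine setIntegral_le_integral hgf ?_
      filter_upwards [hf0] with y hy
      exact mul_nonneg (hg0 y) hy

theorem stmt_6_general
    (α cα : ℝ) (hα : 1 / 2 < α) (hcα : 0 < cα)
    (a : ℝ → ℝ) (ha : ∀ x : ℝ, a x = cα * (1 + |x| ^ 2) ^ (-α))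
    (u₀ : ℝ → ℝ) (hu₀L : MemLp u₀ ⊤ (volume : Measure ℝ))
    (hu₀nn : ∀ᵐ x : ℝ ∂volume, 0 ≤ u₀ x)
    (δ x₀ : ℝ) (hδ : 0 < δ)
    (hu₀low : ∀ᵐ x : ℝ ∂volume, x ∈ Icc (x₀ - δ) (x₀ + δ) → δ ≤ u₀ x) :
    ∃ R > (0 : ℝ), ∃ c₁ > (0 : ℝ), ∃ c₂ > (0 : ℝ), ∀ x : ℝ, R ≤ |x| →
      c₁ * |x| ^ (-(2 * α)) ≤ a x ∧ a x ≤ c₂ * ∫ y : ℝ, a (x - y) * u₀ y := by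
  obtain rfl : a = fun x => cα * (1 + |x| ^ 2) ^ (-α) := funext ha
  have hα0 : 0 ≤ α := by linarith
  refine ⟨max 1 (|x₀| + δ), by positivity, cα * 2 ^ (-α), by positivity,
    4 ^ α / (2 * δ ^ 2), by positivity, fun x hx => ⟨?_, ?_⟩⟩
  · rw [mul_assoc]
    exact mul_le_mul_of_nonneg_left
      (le_one_add_sq_rpow_neg_of_one_le_abs hα0 (le_of_max_le_left hx)) hcα.le
  · have hnear : ∀ y ∈ Icc (x₀ - δ) (x₀ + δ),
        cα * (4 ^ (-α) * (1 + |x| ^ 2) ^ (-α)) ≤ cα * (1 + |x - y| ^ 2) ^ (-α) := by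
      intro y hy
      have hyx : |y| ≤ |x| := abs_le.2
        ⟨by linarith [hy.1, neg_abs_le x₀, le_of_max_le_right hx],
          by linarith [hy.2, le_abs_self x₀, le_of_max_le_right hx]⟩
      exact mul_le_mul_of_nonneg_left (four_rpow_neg_mul_le_one_add_sq_sub_rpow_neg hα0 hyx) hcα.le
    have hconv := mul_measureReal_le_integral_mul
      ((integrable_comp_sub_left _ x).2 ((integrable_one_add_sq_rpow_neg hα).const_mul cα))
      hu₀L (fun y => by positivity) hu₀nn measurableSet_Icc measure_Icc_lt_top.ne hδ.le hnear hu₀low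
    rw [Real.volume_real_Icc_of_le (by linarith)] at hconv
    have h4 : (4 : ℝ) ^ α * 4 ^ (-α) = 1 := by rw [← rpow_add (by norm_num)]; simp
    rw [div_mul_eq_mul_div, le_div_iff₀ (by positivity)]
    beta_reduce
    calc cα * (1 + |x| ^ 2) ^ (-α) * (2 * δ ^ 2)
        = 4 ^ α * (cα * (4 ^ (-α) * (1 + |x| ^ 2) ^ (-α)) * δ * (x₀ + δ - (x₀ - δ))) := by
          linear_combination (-(cα * (1 + |x| ^ 2) ^ (-α) * (2 * δ ^ 2))) * h4
      _ ≤ _ := mul_le_mul_of_nonneg_left hconv (by positivity)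

/-- two-sided tail comparison `|x|^{-2α} ≼ a(x) ≼ (a*u₀)(x)`
for large `|x|`, for `u₀ ∈ L^∞_+(ℝ)`. -/
theorem stmt_6
    (α cα : ℝ) (hα : 1 / 2 < α) (hcα : 0 < cα)
    (a : ℝ → ℝ) (ha : ∀ x : ℝ, a x = cα * (1 + |x| ^ 2) ^ (-α))
    (hnorm : ∫ x : ℝ, a x = 1)
    (u₀ : ℝ → ℝ) (hu₀L : MemLp u₀ ⊤ (volume : Measure ℝ))
    (hu₀nn : ∀ᵐ x : ℝ ∂volume, 0 ≤ u₀ x)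
    (δ x₀ : ℝ) (hδ : 0 < δ)
    (hu₀low : ∀ᵐ x : ℝ ∂volume, x ∈ Icc (x₀ - δ) (x₀ + δ) → δ ≤ u₀ x) :
    ∃ R > (0 : ℝ), ∃ c₁ > (0 : ℝ), ∃ c₂ > (0 : ℝ), ∀ x : ℝ, R ≤ |x| →
      c₁ * |x| ^ (-(2 * α)) ≤ a x ∧ a x ≤ c₂ * ∫ y : ℝ, a (x - y) * u₀ y :=
  stmt_6_general α cα hα hcα a ha u₀ hu₀L hu₀nn δ x₀ hδ hu₀low
end

section
/- Let α > 1/2, let a(x) = c_α (1+|x|²)^{-α} with c_α > 0 the constant making ∫_ℝ a = 1, let ε ∈ (0,1), and define g(x,t) = min{1, |x|^{−2α} e^{(1−ε)t}} and G(x,t,l) = (1/l)∫_t^{t+l} g(x,s) ds for l > 0. Then there exists τ₀ = τ₀(ε) > 0 such that for all l > 0, all x ∈ ℝ, and all t ≥ τ₀: ∂G/∂t(x,t,l) ≤ (a*G)(x,t,l), where the convolution is in the x variable; i.e., G(·,·,l) is a subsolution to ∂u/∂t = a*u on [τ₀,∞). -/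
/-!
The time derivative of `G` is `(g(x, t + l) - g(x, t)) / l`, and since `∂ₜ g ≤ (1 - ε) g` in
the sense of increments, this is at most `(1 - ε) G(x, t, l)`. So it suffices to show
`(1 - ε) g(·, s) ≤ a * g(·, s)` for large `s` and average over `s ∈ [t, t + l]`. For that,
choose `R` so that `a` has mass `≥ θ` on `[-R, R]` and `M` with `(M / (M + R)) ^ (2α) ≥ θ`,
where `θ² = 1 - ε`. Once `e^{(1-ε)s} ≥ (M + R) ^ (2α)`, on every window `[x - R, x + R]` the
profile `g(·, s)` is at least `(M / (M + R)) ^ (2α) g(x, s)`: it equals `1` there when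
`|x| ≤ M`, and for `|x| > M` the power `|y|^{-2α}` drops at most by the factor
`(|x| / (|x| + R)) ^ (2α)`.
-/

open MeasureTheory Real Set Filter Topology

open intervalIntegral in
theorem Continuous.hasDerivAt_intervalIntegral_sliding {f : ℝ → ℝ} (hf : Continuous f)
    (l t : ℝ) : HasDerivAt (fun s => ∫ u in s..s + l, f u) (f (t + l) - f t) t := by
  have hupper : HasDerivAt (fun s => ∫ u in (0 : ℝ)..s + l, f u) (f (t + l)) t := by
    simpa using (hf.integral_hasStrictDerivAt 0 (t + l)).hasDerivAt.comp_add_const t l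
  refine (hupper.sub (hf.integral_hasStrictDerivAt 0 t).hasDerivAt).congr_of_eventuallyEq
    (Eventually.of_forall fun s => ?_)
  exact (integral_interval_sub_left (hf.intervalIntegrable _ _) (hf.intervalIntegrable _ _)).symm

theorem hasDerivAt_mul_exp_mul (c k s : ℝ) :
    HasDerivAt (fun s => c * exp (k * s)) (k * (c * exp (k * s))) s := by
  simpa [mul_comm, mul_left_comm] using ((hasDerivAt_id s).const_mul k).exp.const_mul c

open intervalIntegral in
theorem min_one_mul_exp_sub_le_integral {c k u v : ℝ} (hc : 0 ≤ c) (hk : 0 ≤ k)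
    (huv : u ≤ v) :
    min 1 (c * exp (k * v)) - min 1 (c * exp (k * u)) ≤
      k * ∫ s in u..v, min 1 (c * exp (k * s)) := by
  set h : ℝ → ℝ := fun s => c * exp (k * s)
  have hcont : Continuous h := by fun_prop
  have hmono : Monotone h := fun s s' hss' =>
    mul_le_mul_of_nonneg_left (exp_le_exp.2 (mul_le_mul_of_nonneg_left hss' hk)) hc
  have below : ∀ u v, u ≤ v → h v ≤ 1 →
      min 1 (h v) - min 1 (h u) = k * ∫ s in u..v, min 1 (h s) := by
    intro u v huv hv
    have hcap : ∀ s ∈ uIcc u v, min 1 (h s) = h s := fun s hs =>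
      min_eq_right ((hmono (uIcc_of_le huv ▸ hs).2).trans hv)
    rw [integral_congr hcap, ← intervalIntegral.integral_const_mul,
      integral_eq_sub_of_hasDerivAt (fun s _ => hasDerivAt_mul_exp_mul c k s)
        ((by fun_prop : Continuous fun s => k * h s).intervalIntegrable u v),
      min_eq_right hv, min_eq_right ((hmono huv).trans hv)]
  by_cases hv : h v ≤ 1
  · exact (below u v huv hv).le
  by_cases hu : 1 ≤ h u
  · rw [min_eq_left hu, min_eq_left ((hu.trans (hmono huv))), sub_self]
    exact mul_nonneg hk (integral_nonneg huv fun s _ => le_min zero_le_one (by positivity))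
  push Not at hu hv
  -- past the time `w` where `h` reaches the cap, the profile is constant
  obtain ⟨w, ⟨huw, hwv⟩, hw⟩ :=
    intermediate_value_Icc huv hcont.continuousOn ⟨hu.le, hv.le⟩
  calc min 1 (h v) - min 1 (h u) = min 1 (h w) - min 1 (h u) := by
        rw [hw, min_eq_left hv.le, min_self]
    _ = k * ∫ s in u..w, min 1 (h s) := below u w huw hw.le
    _ ≤ k * ∫ s in u..v, min 1 (h s) := by
        gcongr
        refine integral_mono_interval le_rfl huw hwv
          (Eventually.of_forall fun s => le_min zero_le_one (by positivity)) ?_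
        exact (continuous_const.min hcont).intervalIntegrable u v
theorem mul_intervalIntegral_le_integral_mul_comp_sub {a φ : ℝ → ℝ} (ha : Integrable a)
    (ha0 : ∀ z, 0 ≤ a z) (hφ : AEStronglyMeasurable φ) {C : ℝ} (hφ0 : ∀ y, 0 ≤ φ y)
    (hφC : ∀ y, φ y ≤ C) {x R m : ℝ} (hR : 0 ≤ R)
    (hm : ∀ᵐ y, y ∈ Icc (x - R) (x + R) → m ≤ φ y) :
    m * ∫ z in -R..R, a z ≤ ∫ y, a (x - y) * φ y := by
  have hax : Integrable (fun y => a (x - y)) := ha.comp_sub_left x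
  have hint : Integrable (fun y => a (x - y) * φ y) :=
    hax.mul_bdd hφ (Eventually.of_forall fun y => by
      rw [Real.norm_of_nonneg (hφ0 y)]; exact hφC y)
  have hxR : x - R ≤ x + R := by linarith
  calc m * ∫ z in -R..R, a z = ∫ y in x - R..x + R, a (x - y) * m := by
        rw [intervalIntegral.integral_mul_const, intervalIntegral.integral_comp_sub_left]
        ring_nf
    _ ≤ ∫ y in x - R..x + R, a (x - y) * φ y := by
        refine intervalIntegral.integral_mono_ae_restrict hxR
          (hax.mul_const m).intervalIntegrable hint.intervalIntegrable ?_
        rw [EventuallyLE, ae_restrict_iff' measurableSet_Icc]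
        filter_upwards [hm] with y hy hyI
        exact mul_le_mul_of_nonneg_left (hy hyI) (ha0 _)
    _ ≤ ∫ y, a (x - y) * φ y := by
        rw [intervalIntegral.integral_of_le hxR]
        exact setIntegral_le_integral hint
          (Eventually.of_forall fun y => mul_nonneg (ha0 _) (hφ0 y))

theorem exists_le_intervalIntegral_neg_self {a : ℝ → ℝ} (ha : Integrable a) {θ : ℝ}
    (hθ : θ < ∫ z, a z) : ∃ R, 0 ≤ R ∧ θ ≤ ∫ z in -R..R, a z := by
  have hlim := intervalIntegral_tendsto_integral ha tendsto_neg_atTop_atBot tendsto_id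
  exact ((hlim.eventually (eventually_ge_nhds hθ)).and (eventually_ge_atTop 0)).exists.imp
    fun _ h => ⟨h.2, h.1⟩

theorem eventually_le_rpow_div_add {p θ : ℝ} (R : ℝ) (hθ : θ < 1) :
    ∀ᶠ M in atTop, θ ≤ (M / (M + R)) ^ p := by
  have hratio : Tendsto (fun M => M / (M + R)) atTop (𝓝 1) := by
    have hdefect : Tendsto (fun M => 1 - R / (M + R)) atTop (𝓝 (1 - 0)) :=
      tendsto_const_nhds.sub (tendsto_const_nhds.div_atTop (tendsto_atTop_add_const_right _ R
        tendsto_id))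
    rw [sub_zero] at hdefect
    refine hdefect.congr' ?_
    filter_upwards [eventually_gt_atTop (-R)] with M hM
    field_simp [(by linarith : M + R ≠ 0)]
    ring
  have hpow := ((continuousAt_rpow_const 1 p (Or.inl one_ne_zero)).tendsto.comp hratio)
  rw [one_rpow] at hpow
  exact hpow.eventually (eventually_ge_nhds hθ)
theorem rpow_div_add_mul_min_le {p M R E x y : ℝ} (hp : 0 < p) (hM : 0 < M) (hR : 0 ≤ R)
    (hE : (M + R) ^ p ≤ E) (hy : 0 < |y|) (hyx : |y| ≤ |x| + R) :
    (M / (M + R)) ^ p * min 1 (|x| ^ (-p) * E) ≤ min 1 (|y| ^ (-p) * E) := by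
  have hMR : 0 < M + R := by linarith
  have hxR : 0 < |x| + R := hy.trans_le hyx
  have hE0 : 0 ≤ E := (rpow_nonneg hMR.le p).trans hE
  have hκ₀ : 0 ≤ (M / (M + R)) ^ p := by positivity
  have hfar : min 1 ((|x| + R) ^ (-p) * E) ≤ min 1 (|y| ^ (-p) * E) :=
    min_le_min_left _ (mul_le_mul_of_nonneg_right
      (rpow_le_rpow_of_nonpos hy hyx (neg_nonpos.2 hp.le)) hE0)
  refine le_trans ?_ hfar
  rcases le_or_gt |x| M with hxM | hMx
  · have hone : 1 ≤ (|x| + R) ^ (-p) * E := by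
      rw [rpow_neg hxR.le, inv_mul_eq_div, one_le_div (by positivity)]
      exact (rpow_le_rpow hxR.le (by linarith) hp.le).trans hE
    rw [min_eq_left hone]
    exact mul_le_one₀ (rpow_le_one (by positivity) ((div_le_one hMR).2 (by linarith)) hp.le)
      (le_min zero_le_one (by positivity)) (min_le_left _ _)
  · have hx : 0 < |x| := hM.trans hMx
    set κ := (|x| / (|x| + R)) ^ p with hκ_def
    have hκ₀κ : (M / (M + R)) ^ p ≤ κ := by
      refine rpow_le_rpow (by positivity) ?_ hp.le
      rw [div_le_div_iff₀ hMR hxR]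
      nlinarith
    have hκ : κ ≤ 1 := rpow_le_one (by positivity) ((div_le_one hxR).2 (by linarith)) hp.le
    have hκx : κ * |x| ^ (-p) = (|x| + R) ^ (-p) := by
      rw [hκ_def, div_rpow hx.le hxR.le, rpow_neg hx.le, rpow_neg hxR.le]
      field_simp [(rpow_pos_of_pos hx p).ne']
    calc (M / (M + R)) ^ p * min 1 (|x| ^ (-p) * E) ≤ κ * min 1 (|x| ^ (-p) * E) :=
          mul_le_mul_of_nonneg_right hκ₀κ (le_min zero_le_one (by positivity))
      _ = min κ ((|x| + R) ^ (-p) * E) := by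
          rw [mul_min_of_nonneg _ _ (hκ₀.trans hκ₀κ), mul_one, ← mul_assoc, hκx]
      _ ≤ min 1 ((|x| + R) ^ (-p) * E) := min_le_min_right _ hκ

theorem eventually_mul_min_le_integral_mul_min {a : ℝ → ℝ} (ha : Integrable a)
    (ha0 : ∀ z, 0 ≤ a z) (ha1 : ∫ z, a z = 1) {p c : ℝ} (hp : 0 < p) (hc : c < 1) :
    ∀ᶠ E in atTop, ∀ x,
      c * min 1 (|x| ^ (-p) * E) ≤ ∫ y, a (x - y) * min 1 (|y| ^ (-p) * E) := by
  set θ := √(max c 0)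
  have hθ1 : θ < 1 := (sqrt_lt' one_pos).2 (by simpa using hc)
  have hcθ : c ≤ θ * θ := by rw [mul_self_sqrt (le_max_right _ _)]; exact le_max_left _ _
  obtain ⟨R, hR, hmass⟩ := exists_le_intervalIntegral_neg_self ha (ha1 ▸ hθ1)
  obtain ⟨M, hκ₀, hM⟩ := ((eventually_le_rpow_div_add (p := p) R hθ1).and
    (eventually_gt_atTop 0)).exists
  filter_upwards [eventually_ge_atTop ((M + R) ^ p)] with E hE x
  have hE0 : 0 ≤ E := (rpow_nonneg (by linarith) p).trans hE
  have hwindow : ∀ᵐ y, y ∈ Icc (x - R) (x + R) →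
      (M / (M + R)) ^ p * min 1 (|x| ^ (-p) * E) ≤ min 1 (|y| ^ (-p) * E) := by
    -- `y = 0` must be excluded: there `|y| ^ (-p) = 0`, so the profile vanishes
    filter_upwards [compl_mem_ae_iff.2 (measure_singleton (0 : ℝ))] with y hy0 hy
    refine rpow_div_add_mul_min_le hp hM hR hE (abs_pos.2 hy0) ?_
    have := abs_sub_abs_le_abs_sub y x
    have := abs_sub_le_iff.2 (⟨by linarith [hy.2], by linarith [hy.1]⟩ :
      y - x ≤ R ∧ x - y ≤ R)
    linarith
  have hconv := mul_intervalIntegral_le_integral_mul_comp_sub ha ha0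
    (by fun_prop : Measurable fun y => min 1 (|y| ^ (-p) * E)).aestronglyMeasurable
    (fun y => le_min zero_le_one (by positivity)) (fun y => min_le_left _ _) hR hwindow
  have hgx : 0 ≤ min 1 (|x| ^ (-p) * E) := le_min zero_le_one (by positivity)
  calc c * min 1 (|x| ^ (-p) * E) ≤ θ * θ * min 1 (|x| ^ (-p) * E) :=
        mul_le_mul_of_nonneg_right hcθ hgx
    _ ≤ (M / (M + R)) ^ p * min 1 (|x| ^ (-p) * E) * ∫ z in -R..R, a z := by
        rw [mul_comm θ, mul_right_comm]
        gcongr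
    _ ≤ _ := hconv

theorem mul_setIntegral_le_integral_mul_setIntegral {a : ℝ → ℝ} (ha : Integrable a)
    {F : ℝ → ℝ → ℝ} (hF : Measurable (Function.uncurry F)) {C : ℝ}
    (hFC : ∀ y s, |F y s| ≤ C)
    {S : Set ℝ} (hSm : MeasurableSet S) (hS : volume S ≠ ⊤) {c x : ℝ}
    (hsub : ∀ s ∈ S, c * F x s ≤ ∫ y, a (x - y) * F y s) :
    c * ∫ s in S, F x s ≤ ∫ y, a (x - y) * ∫ s in S, F y s := by
  have : IsFiniteMeasure (volume.restrict S) := isFiniteMeasure_restrict.2 hS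
  have hprod : Integrable (fun q : ℝ × ℝ => a (x - q.2) * F q.2 q.1)
      ((volume.restrict S).prod volume) := by
    have hax : Integrable (fun q : ℝ × ℝ => a (x - q.2))
        ((volume.restrict S).prod volume) := by
      simpa using (integrable_const (1 : ℝ)).mul_prod (ha.comp_sub_left x)
    exact hax.mul_bdd (hF.comp measurable_swap).aestronglyMeasurable
      (Eventually.of_forall fun q => hFC q.2 q.1)
  have hFx : IntegrableOn (fun s => c * F x s) S :=
    (Integrable.of_bound (hF.comp measurable_prodMk_left).aestronglyMeasurable C
      (Eventually.of_forall fun s => hFC x s)).const_mul c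
  calc c * ∫ s in S, F x s = ∫ s in S, c * F x s := (integral_const_mul c _).symm
    _ ≤ ∫ s in S, ∫ y, a (x - y) * F y s :=
        setIntegral_mono_on hFx hprod.integral_prod_left hSm hsub
    _ = ∫ y, ∫ s in S, a (x - y) * F y s := integral_integral_swap hprod
    _ = ∫ y, a (x - y) * ∫ s in S, F y s := by simp_rw [integral_const_mul]

theorem eventually_mul_min_exp_le_integral_mul_min_exp {a : ℝ → ℝ} (ha : Integrable a)
    (ha0 : ∀ z, 0 ≤ a z) (ha1 : ∫ z, a z = 1) {p k c : ℝ} (hp : 0 < p) (hk : 0 < k)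
    (hc : c < 1) :
    ∀ᶠ t in atTop, ∀ x, c * min 1 (|x| ^ (-p) * exp (k * t)) ≤
      ∫ y, a (x - y) * min 1 (|y| ^ (-p) * exp (k * t)) :=
  (tendsto_exp_atTop.comp (tendsto_id.const_mul_atTop hk)).eventually
    (eventually_mul_min_le_integral_mul_min ha ha0 ha1 hp hc)

theorem mul_intervalIntegral_min_exp_le {a : ℝ → ℝ} (ha : Integrable a) {p k c x t l : ℝ}
    (hl : 0 ≤ l) (hsub : ∀ s ∈ Ioc t (t + l), ∀ x, c * min 1 (|x| ^ (-p) * exp (k * s)) ≤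
      ∫ y, a (x - y) * min 1 (|y| ^ (-p) * exp (k * s))) :
    c * ∫ s in t..t + l, min 1 (|x| ^ (-p) * exp (k * s)) ≤
      ∫ y, a (x - y) * ∫ s in t..t + l, min 1 (|y| ^ (-p) * exp (k * s)) := by
  simp only [intervalIntegral.integral_of_le (by linarith : t ≤ t + l)]
  refine mul_setIntegral_le_integral_mul_setIntegral ha
    (F := fun y s => min 1 (|y| ^ (-p) * exp (k * s))) (by fun_prop) (C := 1) (fun y s => ?_)
    measurableSet_Ioc measure_Ioc_lt_top.ne fun s hs => hsub s hs x
  rw [abs_of_nonneg (le_min zero_le_one (by positivity))]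
  exact min_le_left _ _

theorem integrable_one_add_abs_sq_rpow_neg {α : ℝ} (hα : 1 / 2 < α) :
    Integrable fun x : ℝ => (1 + |x| ^ 2) ^ (-α) := by
  have h := integrable_rpow_neg_one_add_norm_sq (E := ℝ) (μ := volume) (r := 2 * α)
    (by simp; linarith)
  convert h using 3 with x
  · simp
  · ring

/-- the time averages `G(x,t,l)` of
`g(x,t) = min{1, |x|^{-2α} e^{(1-ε)t}}` are sub-solutions of `∂u/∂t = a*u`
for large times. -/
theorem stmt_8
    (α cα : ℝ) (hα : 1 / 2 < α) (hcα : 0 < cα)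
    (a : ℝ → ℝ) (ha : ∀ x : ℝ, a x = cα * (1 + |x| ^ 2) ^ (-α))
    (hnorm : ∫ x : ℝ, a x = 1)
    (ε : ℝ) (hε : ε ∈ Ioo (0 : ℝ) 1)
    (g : ℝ → ℝ → ℝ)
    (hg : ∀ x t : ℝ, g x t = min 1 (|x| ^ (-(2 * α)) * Real.exp ((1 - ε) * t)))
    (Gf : ℝ → ℝ → ℝ → ℝ)
    (hGf : ∀ x t l : ℝ, Gf x t l = (1 / l) * ∫ s in t..(t + l), g x s) :
    ∃ τ₀ > (0 : ℝ), ∀ l : ℝ, 0 < l → ∀ x t : ℝ, τ₀ ≤ t →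
      ∃ d : ℝ, HasDerivAt (fun s => Gf x s l) d t ∧
        d ≤ ∫ y : ℝ, a (x - y) * Gf y t l := by
  obtain ⟨hε0, hε1⟩ := hε
  have ha_int : Integrable a := by
    rw [funext ha]; exact (integrable_one_add_abs_sq_rpow_neg hα).const_mul cα
  have ha0 : ∀ z, 0 ≤ a z := fun z => by rw [ha]; positivity
  obtain ⟨τ, hτ⟩ := eventually_atTop.1 (eventually_mul_min_exp_le_integral_mul_min_exp ha_int
    ha0 hnorm (p := 2 * α) (k := 1 - ε) (c := 1 - ε) (by linarith) (by linarith) (by linarith))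
  refine ⟨max τ 1, by positivity, fun l hl x t ht => ?_⟩
  simp only [hGf, hg]
  refine ⟨_, ((by fun_prop : Continuous fun s => min 1 (|x| ^ (-(2 * α)) * exp ((1 - ε) * s)))
    |>.hasDerivAt_intervalIntegral_sliding l t).const_mul (1 / l), ?_⟩
  have hΔ := min_one_mul_exp_sub_le_integral (by positivity : 0 ≤ |x| ^ (-(2 * α)))
    (by linarith : 0 ≤ 1 - ε) (by linarith : t ≤ t + l)
  have havg := mul_intervalIntegral_min_exp_le ha_int (x := x) hl.le
    fun s hs => hτ s ((le_max_left _ _).trans (ht.trans hs.1.le))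
  refine (mul_le_mul_of_nonneg_left (hΔ.trans havg) (by positivity : 0 ≤ 1 / l)).trans_eq ?_
  rw [← integral_const_mul]
  simp only [mul_left_comm]
end

section
/- Let α > 1/2, let a(x) = c_α (1+|x|²)^{-α} with c_α > 0 the constant making ∫_ℝ a = 1, let ε ∈ (0,1), and define h(x,t) = 1_{x ≤ 0} + min{1, x^{−2α+1} e^{(1−ε)t}}·1_{x > 0} and H(x,t,l) = (1/l)∫_t^{t+l} h(x,s) ds for l > 0. Then there exists τ₀ = τ₀(ε) > 0 such that for all l > 0, all x ∈ ℝ, and all t ≥ τ₀: ∂H/∂t(x,t,l) ≤ (a*H)(x,t,l), where the convolution is in the x variable; i.e., H(·,·,l) is a subsolution to ∂u/∂t = a*u on [τ₀,∞). -/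
/-!
Write `m = 2α - 1`, `k = 1 - ε`, so that `h(x, ·) = min 1 (x^(-m) e^(k·))` for `x > 0`. Since
`∂ₜ H = (h(x, t + l) - h(x, t)) / l`, it suffices that
`h(x, t + l) - h(x, t) ≤ k ∫ₜ^{t+l} h(x, s) ds ≤ ∫ₜ^{t+l} (a * h)(x, s) ds`; Fubini then turns the
right-hand side into `l · (a * H)(x, t, l)`. The first inequality holds because `e^(ks)` grows at
rate `k` and capping at `1` only slows it down. For the second, `h(·, s)` is decreasing, so
`(a * h)(x) ≥ h(x + R) ∫_{-R}^{R} a`, and the mass of `a` on `[-R, R]` is close to `1` for large `R`.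
Finally `h(x + R, s) ≥ θ^m h(x, s)` for `x ≥ θR/(1 - θ)`, while for smaller `x` we have
`h(x + R, s) = 1` once `e^(ks/m) ≥ x + R`, i.e. for all large times `s`.
-/

open MeasureTheory Real Set

theorem hasDerivAt_integral_add_const {f : ℝ → ℝ} (hf : Continuous f) (l t : ℝ) :
    HasDerivAt (fun s => ∫ r in s..s + l, f r) (f (t + l) - f t) t := by
  have hprim : ∀ b, HasDerivAt (fun u => ∫ r in (0 : ℝ)..u, f r) (f b) b :=
    fun b => (hf.integral_hasStrictDerivAt 0 b).hasDerivAt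
  have hsplit : (fun s => ∫ r in s..s + l, f r) =
      fun s => (∫ r in (0 : ℝ)..s + l, f r) - ∫ r in (0 : ℝ)..s, f r := by
    funext s
    rw [intervalIntegral.integral_interval_sub_left (hf.intervalIntegrable _ _)
      (hf.intervalIntegrable _ _)]
  rw [hsplit]
  exact ((hprim (t + l)).comp_add_const t l).sub (hprim t)

section GrowthCappedAtOne

variable {φ : ℝ → ℝ} {k t t' : ℝ}

theorem sub_le_integral_min_one_of_le_one (hφ : ∀ s, HasDerivAt φ (k * φ s) s)
    (hmono : Monotone φ) (htt' : t ≤ t') (hφt' : φ t' ≤ 1) :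
    min 1 (φ t') - min 1 (φ t) ≤ k * ∫ s in t..t', min 1 (φ s) := by
  have hcap : ∀ s ∈ uIcc t t', min 1 (φ s) = φ s := fun s hs =>
    min_eq_right ((hmono (uIcc_of_le htt' ▸ hs).2).trans hφt')
  have hcont : Continuous φ := continuous_iff_continuousAt.2 fun s => (hφ s).continuousAt
  rw [hcap t left_mem_uIcc, hcap t' right_mem_uIcc, intervalIntegral.integral_congr hcap,
    ← intervalIntegral.integral_const_mul,
    intervalIntegral.integral_eq_sub_of_hasDerivAt (fun s _ => hφ s)
      ((continuous_const.mul hcont).intervalIntegrable _ _)]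

theorem sub_le_integral_min_one (hφ : ∀ s, HasDerivAt φ (k * φ s) s) (hk : 0 ≤ k)
    (hφ0 : ∀ s, 0 ≤ φ s) (htt' : t ≤ t') :
    min 1 (φ t') - min 1 (φ t) ≤ k * ∫ s in t..t', min 1 (φ s) := by
  have hcont : Continuous φ := continuous_iff_continuousAt.2 fun s => (hφ s).continuousAt
  have hmono : Monotone φ := monotone_of_deriv_nonneg (fun s => (hφ s).differentiableAt)
    fun s => (hφ s).deriv ▸ mul_nonneg hk (hφ0 s)
  have hcap0 : ∀ s, 0 ≤ min 1 (φ s) := fun s => le_min zero_le_one (hφ0 s)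
  rcases le_or_gt 1 (φ t) with hsat | hunsat
  · have : 0 ≤ ∫ s in t..t', min 1 (φ s) :=
      intervalIntegral.integral_nonneg htt' fun s _ => hcap0 s
    rw [min_eq_left hsat]
    nlinarith [min_le_left 1 (φ t')]
  rcases le_or_gt (φ t') 1 with hφt' | hφt'
  · exact sub_le_integral_min_one_of_le_one hφ hmono htt' hφt'
  obtain ⟨τ, ⟨htτ, hτt'⟩, hφτ⟩ :=
    intermediate_value_Icc htt' hcont.continuousOn ⟨hunsat.le, hφt'.le⟩
  calc min 1 (φ t') - min 1 (φ t) = min 1 (φ τ) - min 1 (φ t) := by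
        rw [hφτ, min_eq_left hφt'.le, min_self]
    _ ≤ k * ∫ s in t..τ, min 1 (φ s) :=
        sub_le_integral_min_one_of_le_one hφ hmono htτ hφτ.le
    _ ≤ k * ∫ s in t..t', min 1 (φ s) := mul_le_mul_of_nonneg_left
        (intervalIntegral.integral_mono_interval le_rfl htτ hτt' (ae_of_all _ fun s => hcap0 s)
          ((continuous_const.min hcont).intervalIntegrable _ _)) hk

end GrowthCappedAtOne

noncomputable def frontProfile (m k x t : ℝ) : ℝ :=
  if x ≤ 0 then 1 else min 1 (x ^ (-m) * exp (k * t))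

namespace frontProfile

variable {m k x t : ℝ}

theorem nonneg : 0 ≤ frontProfile m k x t := by
  unfold frontProfile
  split_ifs with hx
  · exact zero_le_one
  · exact le_min zero_le_one (by have := rpow_nonneg (le_of_not_ge hx) (-m); positivity)

theorem le_one : frontProfile m k x t ≤ 1 := by
  unfold frontProfile
  split_ifs
  exacts [le_rfl, min_le_left _ _]

theorem continuous (m k x : ℝ) : Continuous (frontProfile m k x) := by
  unfold frontProfile
  split_ifs
  · exact continuous_const
  · fun_prop

theorem measurable_uncurry (m k : ℝ) : Measurable (Function.uncurry (frontProfile m k)) := by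
  unfold frontProfile
  refine Measurable.ite (measurableSet_le measurable_fst measurable_const) measurable_const ?_
  fun_prop

theorem antitone (hm : 0 ≤ m) (k t : ℝ) : Antitone fun x => frontProfile m k x t := by
  intro x y hxy
  dsimp only [frontProfile]
  split_ifs with hy hx hx
  · exact le_rfl
  · exact absurd (hxy.trans hy) hx
  · exact min_le_left _ _
  · exact min_le_min le_rfl (mul_le_mul_of_nonneg_right
      (rpow_le_rpow_of_nonpos (lt_of_not_ge hx) hxy (neg_nonpos.2 hm)) (exp_pos _).le)

theorem eq_one (hm : 0 < m) (hx : x ≤ exp (k * t / m)) : frontProfile m k x t = 1 := by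
  unfold frontProfile
  split_ifs with hx0
  · rfl
  refine min_eq_left ?_
  have hpow : exp (k * t / m) ^ (-m) = exp (-(k * t)) := by
    rw [← exp_mul]; congr 1; field_simp
  calc (1 : ℝ) = exp (k * t / m) ^ (-m) * exp (k * t) := by rw [hpow, ← exp_add]; simp
    _ ≤ x ^ (-m) * exp (k * t) := mul_le_mul_of_nonneg_right
        (rpow_le_rpow_of_nonpos (lt_of_not_ge hx0) hx (by linarith)) (exp_pos _).le

theorem div_rpow_mul_le (hm : 0 ≤ m) (hx : 0 < x) {R : ℝ} (hR : 0 ≤ R) :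
    (x / (x + R)) ^ m * frontProfile m k x t ≤ frontProfile m k (x + R) t := by
  have hxR : 0 < x + R := by linarith
  set q := (x / (x + R)) ^ m with hq
  have hq0 : 0 ≤ q := rpow_nonneg (by positivity) m
  have hq1 : q ≤ 1 := rpow_le_one (by positivity) ((div_le_one hxR).2 (by linarith)) hm
  have hshift : (x + R) ^ (-m) = q * x ^ (-m) := by
    rw [hq, div_rpow hx.le hxR.le, rpow_neg hxR.le, rpow_neg hx.le]
    field_simp
  simp only [frontProfile, if_neg (not_le.2 hx), if_neg (not_le.2 hxR), hshift,
    mul_min_of_nonneg _ _ hq0, mul_one, mul_assoc]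
  exact min_le_min_right _ hq1

theorem sub_le_integral (hk : 0 ≤ k) (x : ℝ) {t t' : ℝ} (htt' : t ≤ t') :
    frontProfile m k x t' - frontProfile m k x t ≤ k * ∫ s in t..t', frontProfile m k x s := by
  unfold frontProfile
  split_ifs with hx
  · simp only [sub_self, intervalIntegral.integral_const, smul_eq_mul, mul_one]
    nlinarith
  · refine sub_le_integral_min_one (φ := fun s => x ^ (-m) * exp (k * s)) (fun s => ?_) hk
      (fun s => ?_) htt'
    · refine (((hasDerivAt_id s).const_mul k).exp.const_mul (x ^ (-m))).congr_deriv ?_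
      simp only [id, mul_one]
      ring
    · have := rpow_nonneg (le_of_not_ge hx) (-m); positivity

end frontProfile

section KernelFubini

variable {g : ℝ → ℝ} {F : ℝ → ℝ → ℝ} {C : ℝ}

theorem integrable_mul_prod_of_bounded (hg : Integrable g) (hF : Measurable (Function.uncurry F))
    (hFC : ∀ y s, ‖F y s‖ ≤ C) (ν : Measure ℝ) [IsFiniteMeasure ν] :
    Integrable (fun p : ℝ × ℝ => g p.1 * F p.1 p.2) (volume.prod ν) :=
  (hg.comp_fst ν).mul_bdd hF.aestronglyMeasurable (ae_of_all _ fun p => hFC p.1 p.2)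

theorem intervalIntegrable_integral_mul (hg : Integrable g) (hF : Measurable (Function.uncurry F))
    (hFC : ∀ y s, ‖F y s‖ ≤ C) (t t' : ℝ) :
    IntervalIntegrable (fun s => ∫ y, g y * F y s) volume t t' :=
  intervalIntegrable_iff.2 (integrable_mul_prod_of_bounded hg hF hFC
    (volume.restrict (Ioc (t ⊓ t') (t ⊔ t')))).integral_prod_right

theorem integral_mul_intervalIntegral_comm (hg : Integrable g)
    (hF : Measurable (Function.uncurry F)) (hFC : ∀ y s, ‖F y s‖ ≤ C) {t t' : ℝ} (htt' : t ≤ t') :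
    ∫ y, g y * ∫ s in t..t', F y s = ∫ s in t..t', ∫ y, g y * F y s := by
  simp only [intervalIntegral.integral_of_le htt', ← integral_const_mul]
  exact integral_integral_swap (integrable_mul_prod_of_bounded hg hF hFC _)

end KernelFubini

theorem mul_integral_le_integral_mul_of_antitone {a f : ℝ → ℝ} (ha : Integrable a)
    (ha0 : ∀ z, 0 ≤ a z) (hf : Antitone f) (hf0 : ∀ y, 0 ≤ f y) {C : ℝ} (hfC : ∀ y, f y ≤ C)
    (x : ℝ) {R : ℝ} (hR : 0 ≤ R) :
    f (x + R) * ∫ z in -R..R, a z ≤ ∫ y, a (x - y) * f y := by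
  have hint : Integrable fun y => a (x - y) * f y :=
    (ha.comp_sub_left x).mul_bdd hf.measurable.aestronglyMeasurable
      (ae_of_all _ fun y => by rw [Real.norm_of_nonneg (hf0 y)]; exact hfC y)
  have hwindow : ∫ z in -R..R, a z = ∫ y in x - R..x + R, a (x - y) := by
    rw [intervalIntegral.integral_comp_sub_left a x]
    ring_nf
  have hle : x - R ≤ x + R := by linarith
  calc f (x + R) * ∫ z in -R..R, a z = ∫ y in x - R..x + R, a (x - y) * f (x + R) := by
        rw [hwindow, intervalIntegral.integral_mul_const, mul_comm]
    _ ≤ ∫ y in x - R..x + R, a (x - y) * f y :=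
        intervalIntegral.integral_mono_on hle
          (((ha.comp_sub_left x).mul_const _).intervalIntegrable) hint.intervalIntegrable
          fun y hy => mul_le_mul_of_nonneg_left (hf hy.2) (ha0 _)
    _ ≤ ∫ y, a (x - y) * f y := by
        rw [intervalIntegral.integral_of_le hle]
        exact setIntegral_le_integral hint (ae_of_all _ fun y => mul_nonneg (ha0 _) (hf0 y))

namespace frontProfile

variable {m k : ℝ}

theorem eventually_mul_le_shift (hm : 0 < m) (hk : 0 < k) {δ R : ℝ} (hδ : δ < 1) (hR : 0 ≤ R) :
    ∀ᶠ t in Filter.atTop, ∀ x, δ * frontProfile m k x t ≤ frontProfile m k (x + R) t := by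
  set θ := (max δ (1 / 2)) ^ m⁻¹
  have hmax0 : 0 ≤ max δ (1 / 2) := le_max_of_le_right (by norm_num)
  have hθ0 : 0 < θ := rpow_pos_of_pos (lt_max_of_lt_right (by norm_num)) _
  have hθ1 : θ < 1 := rpow_lt_one hmax0 (max_lt hδ (by norm_num)) (inv_pos.2 hm)
  have hδθ : δ ≤ θ ^ m := by rw [rpow_inv_rpow hmax0 hm.ne']; exact le_max_left _ _
  -- beyond `x₁` the shift by `R` costs at most the factor `θ ^ m`
  set x₁ := θ * R / (1 - θ)
  have hx₁ : 0 ≤ x₁ := div_nonneg (mul_nonneg hθ0.le hR) (by linarith)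
  have hexp : Filter.Tendsto (fun t => exp (k * t / m)) Filter.atTop Filter.atTop := by
    simp only [mul_div_right_comm k]
    exact tendsto_exp_atTop.comp (Filter.tendsto_id.const_mul_atTop (div_pos hk hm))
  filter_upwards [hexp.eventually_ge_atTop (x₁ + R)] with t ht x
  rcases le_or_gt x x₁ with hx | hx
  · rw [eq_one (x := x + R) hm (by linarith)]
    nlinarith [nonneg (m := m) (k := k) (x := x) (t := t),
      le_one (m := m) (k := k) (x := x) (t := t)]
  · have hx0 : 0 < x := hx₁.trans_lt hx
    have hθx : θ ≤ x / (x + R) := by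
      rw [le_div_iff₀ (by linarith), ← sub_nonneg]
      have := (div_le_iff₀ (by linarith : 0 < 1 - θ)).1 hx.le
      nlinarith
    calc δ * frontProfile m k x t ≤ (x / (x + R)) ^ m * frontProfile m k x t :=
          mul_le_mul_of_nonneg_right
            (hδθ.trans (rpow_le_rpow hθ0.le hθx hm.le)) nonneg
      _ ≤ frontProfile m k (x + R) t := div_rpow_mul_le hm.le hx0 hR

theorem eventually_mul_le_integral_mul (hm : 0 < m) (hk : 0 < k) {a : ℝ → ℝ}
    (ha : Integrable a) (ha0 : ∀ z, 0 ≤ a z) (ha1 : ∫ z, a z = 1) {δ : ℝ} (hδ0 : 0 ≤ δ)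
    (hδ : δ < 1) :
    ∀ᶠ t in Filter.atTop, ∀ x,
      δ * frontProfile m k x t ≤ ∫ y, a (x - y) * frontProfile m k y t := by
  -- split `δ = √δ * √δ`: one factor for the shift, one for the mass of `a` on `[-R, R]`
  have hsqrt : √δ < 1 := (sqrt_lt' one_pos).2 (by linarith)
  have hmass : Filter.Tendsto (fun R => ∫ z in -R..R, a z) Filter.atTop (nhds 1) :=
    ha1 ▸ intervalIntegral_tendsto_integral ha Filter.tendsto_neg_atTop_atBot Filter.tendsto_id
  obtain ⟨R, hRmass, hR⟩ := ((hmass.eventually (eventually_ge_nhds hsqrt)).and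
    (Filter.eventually_ge_atTop 0)).exists
  filter_upwards [eventually_mul_le_shift hm hk hsqrt hR] with t ht x
  calc δ * frontProfile m k x t = √δ * (√δ * frontProfile m k x t) := by
        rw [← mul_assoc, mul_self_sqrt hδ0]
    _ ≤ √δ * frontProfile m k (x + R) t := mul_le_mul_of_nonneg_left (ht x) (sqrt_nonneg δ)
    _ ≤ frontProfile m k (x + R) t * ∫ z in -R..R, a z := by
        rw [mul_comm]; exact mul_le_mul_of_nonneg_left hRmass nonneg
    _ ≤ ∫ y, a (x - y) * frontProfile m k y t :=
        mul_integral_le_integral_mul_of_antitone ha ha0 (antitone hm.le k t)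
          (fun _ => nonneg) (fun _ => le_one) x hR

theorem sub_le_integral_mul_intervalIntegral (hk : 0 ≤ k) {a : ℝ → ℝ} (ha : Integrable a)
    {τ : ℝ} (hτ : ∀ s, τ ≤ s → ∀ x, k * frontProfile m k x s ≤
      ∫ y, a (x - y) * frontProfile m k y s)
    {l t : ℝ} (hl : 0 < l) (ht : τ ≤ t) (x : ℝ) :
    frontProfile m k x (t + l) - frontProfile m k x t ≤
      ∫ y, a (x - y) * ∫ s in t..t + l, frontProfile m k y s := by
  have hbdd : ∀ y s, ‖frontProfile m k y s‖ ≤ 1 := fun y s => by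
    rw [Real.norm_of_nonneg nonneg]; exact le_one
  have hg := ha.comp_sub_left x
  calc frontProfile m k x (t + l) - frontProfile m k x t
      ≤ ∫ s in t..t + l, k * frontProfile m k x s := by
        rw [intervalIntegral.integral_const_mul]
        exact sub_le_integral hk x (by linarith)
    _ ≤ ∫ s in t..t + l, ∫ y, a (x - y) * frontProfile m k y s :=
        intervalIntegral.integral_mono_on (by linarith)
          (((continuous m k x).const_mul k).intervalIntegrable _ _)
          (intervalIntegrable_integral_mul hg (measurable_uncurry m k) hbdd _ _)
          fun s hs => hτ s (ht.trans hs.1) x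
    _ = ∫ y, a (x - y) * ∫ s in t..t + l, frontProfile m k y s :=
        (integral_mul_intervalIntegral_comm hg (measurable_uncurry m k) hbdd (by linarith)).symm

end frontProfile

/-- the time averages `H(x,t,l)` of
`h(x,t) = 1_{x ≤ 0} + min{1, x^{-2α+1} e^{(1-ε)t}}·1_{x > 0}` are
sub-solutions of `∂u/∂t = a*u` for large times. -/
theorem stmt_9
    (α cα : ℝ) (hα : 1 / 2 < α) (hcα : 0 < cα)
    (a : ℝ → ℝ) (ha : ∀ x : ℝ, a x = cα * (1 + |x| ^ 2) ^ (-α))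
    (hnorm : ∫ x : ℝ, a x = 1)
    (ε : ℝ) (hε : ε ∈ Ioo (0 : ℝ) 1)
    (h : ℝ → ℝ → ℝ)
    (hh : ∀ x t : ℝ, h x t =
      (if x ≤ 0 then (1 : ℝ) else 0) +
        min 1 ((if 0 < x then x ^ (-(2 * α) + 1) * Real.exp ((1 - ε) * t) else 0)))
    (Hf : ℝ → ℝ → ℝ → ℝ)
    (hHf : ∀ x t l : ℝ, Hf x t l = (1 / l) * ∫ s in t..(t + l), h x s) :
    ∃ τ₀ > (0 : ℝ), ∀ l : ℝ, 0 < l → ∀ x t : ℝ, τ₀ ≤ t →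
      ∃ d : ℝ, HasDerivAt (fun s => Hf x s l) d t ∧
        d ≤ ∫ y : ℝ, a (x - y) * Hf y t l := by
  obtain ⟨hε0, hε1⟩ := hε
  have hm : 0 < 2 * α - 1 := by linarith
  have hk : 0 < 1 - ε := by linarith
  have hprof : h = frontProfile (2 * α - 1) (1 - ε) := by
    funext x t
    have hexponent : -(2 * α) + 1 = -(2 * α - 1) := by ring
    rw [hh, frontProfile, hexponent]
    by_cases hx : x ≤ 0
    · simp [hx, not_lt.2 hx]
    · simp [hx, lt_of_not_ge hx]
  subst hprof
  have ha0 : ∀ z, 0 ≤ a z := fun z => by rw [ha z]; positivity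
  have haint : Integrable a := .of_integral_ne_zero (by rw [hnorm]; exact one_ne_zero)
  obtain ⟨τ, hτ⟩ := Filter.eventually_atTop.1
    (frontProfile.eventually_mul_le_integral_mul hm hk haint ha0 hnorm hk.le (by linarith))
  set f := frontProfile (2 * α - 1) (1 - ε)
  refine ⟨max τ 1, lt_max_of_lt_right one_pos, fun l hl x t ht =>
    ⟨1 / l * (f x (t + l) - f x t), ?_, ?_⟩⟩
  · rw [show (fun s => Hf x s l) = fun s => 1 / l * ∫ r in s..s + l, f x r from
      funext fun s => hHf x s l]
    exact (hasDerivAt_integral_add_const (frontProfile.continuous _ _ x) l t).const_mul (1 / l)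
  calc 1 / l * (f x (t + l) - f x t)
      ≤ 1 / l * ∫ y, a (x - y) * ∫ s in t..t + l, f y s := by
        gcongr
        exact frontProfile.sub_le_integral_mul_intervalIntegral hk.le haint hτ hl
          ((le_max_left _ _).trans ht) x
    _ = ∫ y, a (x - y) * Hf y t l := by
        simp only [hHf, mul_left_comm _ (1 / l), integral_const_mul]
end

section
/- Let α > 1/2, let a(x) = c_α (1+|x|²)^{-α} with c_α > 0 the constant making ∫_ℝ a = 1, and let γ ∈ (1/(2α), 1). Then for every δ ∈ (0,1) there exists λ = λ(δ,γ) > 0 such that, with ω_λ(x) := min{λ, (a(x))^γ}, one has (a*ω_λ)(x) ≤ (1+δ)·ω_λ(x) for all x ∈ ℝ. -/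
/-!
Where `ω_λ(x) = λ` the bound is immediate from `a * ω_λ ≤ λ ∫ a = λ`. Where `ω_λ(x) = a(x)^γ < λ`,
`x` lies far out once `λ` is small. Split the convolution integral at `|y| = R`. For `|y| ≤ R`
the kernel is flat at scales `≪ |x|`, so `a(x-y)^γ ≤ (1 + δ/2) a(x)^γ`. For `|y| > R`, one of
`|x - y|`, `|y|` is at least `|x|/2`, and the doubling bounds `a(z) ≲ a(x) ≲ a(x)^γ` (as
`γ ≤ 1`) and `a(z)^γ ≲ a(x)^γ` bound the integrand by `C a(x)^γ (a(y) + ω_λ(x-y))`. The tail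
`∫_{|y|>R} a` is small for large `R`, and `∫ ω_λ` is small for small `λ` because `a^γ` is
integrable, which is exactly where `2αγ > 1` enters.
-/

open MeasureTheory Real Set Filter Topology Metric

theorem tendsto_setIntegral_compl_closedBall {α E : Type*} [PseudoMetricSpace α] [MeasurableSpace α]
    [OpensMeasurableSpace α] [NormedAddCommGroup E] [NormedSpace ℝ E] {μ : Measure α}
    {f : α → E} (hf : Integrable f μ) (x : α) :
    Tendsto (fun R => ∫ y in (closedBall x R)ᶜ, f y ∂μ) atTop (𝓝 0) := by
  have hball :=
    (aecover_closedBall (μ := μ) (x := x) tendsto_id).integral_tendsto_of_countably_generated hf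
  simpa [setIntegral_compl isClosed_closedBall.measurableSet hf] using
    hball.const_sub (∫ y, f y ∂μ)

theorem integrable_min_const {α : Type*} [MeasurableSpace α] {μ : Measure α} {f : α → ℝ}
    (hf : Integrable f μ) (hf0 : ∀ x, 0 ≤ f x) {c : ℝ} (hc : 0 ≤ c) :
    Integrable (fun x => min c (f x)) μ :=
  hf.mono' (aestronglyMeasurable_const.inf hf.1) <| .of_forall fun x => by
    rw [norm_of_nonneg (le_min hc (hf0 x))]
    exact min_le_right _ _

theorem tendsto_integral_min_nhdsGT_zero {α : Type*} [MeasurableSpace α] {μ : Measure α}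
    {f : α → ℝ} (hf : Integrable f μ) (hf0 : ∀ x, 0 ≤ f x) :
    Tendsto (fun c => ∫ x, min c (f x) ∂μ) (𝓝[>] 0) (𝓝 0) := by
  have hlim : ∀ x, Tendsto (fun c => min c (f x)) (𝓝[>] 0) (𝓝 0) := fun x =>
    ((continuous_id.min continuous_const).tendsto' (0 : ℝ) 0
      (min_eq_left (hf0 x))).mono_left nhdsWithin_le_nhds
  simpa using tendsto_integral_filter_of_dominated_convergence (l := 𝓝[>] (0 : ℝ)) f
    (eventually_nhdsWithin_of_forall fun c hc => (integrable_min_const hf hf0 (le_of_lt hc)).1)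
    (eventually_nhdsWithin_of_forall fun c hc => .of_forall fun x => by
      rw [norm_of_nonneg (le_min (le_of_lt hc) (hf0 x))]
      exact min_le_right _ _)
    hf (.of_forall hlim)

theorem mul_min_le_of_doubling {a w : ℝ → ℝ} {C lam x y : ℝ}
    (ha_le : ∀ z, |x| ≤ 2 * |z| → a z ≤ C * w x)
    (hw_le : ∀ z, |x| ≤ 2 * |z| → w z ≤ C * w x)
    (hay : 0 ≤ a y) (hm : 0 ≤ min lam (w (x - y))) :
    a y * min lam (w (x - y)) ≤ C * w x * (a y + min lam (w (x - y))) := by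
  have hxy := abs_sub_abs_le_abs_sub x y
  rcases le_total |y| |x - y| with hy | hy
  · have h := (min_le_right lam _).trans (hw_le (x - y) (by linarith))
    nlinarith [mul_le_mul_of_nonneg_left h hay, mul_nonneg (hm.trans h) hm]
  · have h := ha_le y (by linarith)
    nlinarith [mul_le_mul_of_nonneg_right h hm, mul_nonneg (hay.trans h) hay]

theorem integral_mul_min_le {a w : ℝ → ℝ} {C R η ε lam x : ℝ}
    (ha : Integrable a) (ha0 : ∀ y, 0 ≤ a y) (ha1 : ∫ y, a y = 1)
    (hw : Integrable w) (hw0 : ∀ z, 0 ≤ w z) (hlam : 0 ≤ lam) (hη : 0 ≤ η)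
    (ha_le : ∀ z, |x| ≤ 2 * |z| → a z ≤ C * w x)
    (hw_le : ∀ z, |x| ≤ 2 * |z| → w z ≤ C * w x)
    (hnear : ∀ y, |y| ≤ R → w (x - y) ≤ (1 + η) * w x)
    (htail : ∫ y in (closedBall 0 R)ᶜ, a y ≤ ε) (hsmall : ∫ z, min lam (w z) ≤ ε) :
    ∫ y, a y * min lam (w (x - y)) ≤ (1 + η + 2 * C * ε) * w x := by
  have hm0 : ∀ z, 0 ≤ min lam (w z) := fun z => le_min hlam (hw0 z)
  have hm : Integrable fun y => min lam (w (x - y)) :=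
    (integrable_min_const hw hw0 hlam).comp_sub_left x
  have hCw : 0 ≤ C * w x := (hw0 x).trans (hw_le x (by linarith [abs_nonneg x]))
  have hpt : ∀ y, a y * min lam (w (x - y)) ≤ (1 + η) * w x * a y +
      C * w x * ((closedBall 0 R)ᶜ.indicator a y + min lam (w (x - y))) := by
    intro y
    by_cases hy : |y| ≤ R
    · have hin : y ∉ (closedBall (0 : ℝ) R)ᶜ := by simpa using hy
      rw [indicator_of_notMem hin, zero_add]
      have h := (min_le_right lam _).trans (hnear y hy)
      nlinarith [mul_le_mul_of_nonneg_left h (ha0 y), mul_nonneg hCw (hm0 (x - y))]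
    · have hout : y ∈ (closedBall (0 : ℝ) R)ᶜ := by simpa using hy
      rw [indicator_of_mem hout]
      nlinarith [mul_min_le_of_doubling ha_le hw_le (ha0 y) (hm0 (x - y)),
        mul_nonneg (mul_nonneg (by linarith : (0 : ℝ) ≤ 1 + η) (hw0 x)) (ha0 y)]
  have htail_int : Integrable ((closedBall 0 R)ᶜ.indicator a) :=
    ha.indicator measurableSet_closedBall.compl
  have hfar_int : Integrable fun y =>
      C * w x * ((closedBall 0 R)ᶜ.indicator a y + min lam (w (x - y))) :=
    (htail_int.add hm).const_mul _
  calc ∫ y, a y * min lam (w (x - y))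
      ≤ ∫ y, ((1 + η) * w x * a y +
          C * w x * ((closedBall 0 R)ᶜ.indicator a y + min lam (w (x - y)))) :=
        integral_mono_of_nonneg (.of_forall fun y => mul_nonneg (ha0 y) (hm0 _))
          ((ha.const_mul _).add hfar_int) (.of_forall hpt)
    _ = (1 + η) * w x * (∫ y, a y) +
          C * w x * ((∫ y in (closedBall 0 R)ᶜ, a y) + ∫ z, min lam (w z)) := by
        rw [integral_add (ha.const_mul _) hfar_int, integral_const_mul, integral_const_mul,
          integral_add htail_int hm, integral_indicator measurableSet_closedBall.compl,
          integral_sub_left_eq_self (fun z => min lam (w z))]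
    _ ≤ (1 + η) * w x * 1 + C * w x * (ε + ε) := by
        rw [ha1]
        gcongr
    _ = (1 + η + 2 * C * ε) * w x := by ring

theorem exists_integral_mul_min_le {a w : ℝ → ℝ} {C : ℝ}
    (ha : Integrable a) (ha0 : ∀ y, 0 ≤ a y) (ha1 : ∫ y, a y = 1)
    (hw : Integrable w) (hw0 : ∀ z, 0 < w z)
    (hw_anti : ∀ x z, |x| ≤ |z| → w z ≤ w x)
    (ha_le : ∀ x z, |x| ≤ 2 * |z| → a z ≤ C * w x)
    (hw_le : ∀ x z, |x| ≤ 2 * |z| → w z ≤ C * w x)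
    (hflat : ∀ η > 0, ∀ R, ∃ X, ∀ x y, X ≤ |x| → |y| ≤ R → w (x - y) ≤ (1 + η) * w x)
    {δ : ℝ} (hδ : 0 < δ) :
    ∃ lam > 0, ∀ x, ∫ y, a y * min lam (w (x - y)) ≤ (1 + δ) * min lam (w x) := by
  have hC : 0 < C := by
    have h := hw_le 0 0 (by simp)
    nlinarith [hw0 0]
  set ε := δ / (4 * C)
  have hε : 0 < ε := by positivity
  obtain ⟨R, hR⟩ :=
    ((tendsto_setIntegral_compl_closedBall ha 0).eventually (eventually_le_nhds hε)).exists
  obtain ⟨X, hX⟩ := hflat (δ / 2) (by positivity) R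
  obtain ⟨lam, hsmall, hlam0, hlamX⟩ :=
    (((tendsto_integral_min_nhdsGT_zero hw fun z => (hw0 z).le).eventually
      (eventually_le_nhds hε)).and (Ioc_mem_nhdsGT (hw0 X))).exists
  refine ⟨lam, hlam0, fun x => ?_⟩
  rcases le_or_gt lam (w x) with hx | hx
  · rw [min_eq_left hx]
    calc ∫ y, a y * min lam (w (x - y)) ≤ ∫ y, lam * a y :=
          integral_mono_of_nonneg
            (.of_forall fun y => mul_nonneg (ha0 y) (le_min hlam0.le (hw0 _).le))
            (ha.const_mul lam)
            (.of_forall fun y => by nlinarith [min_le_left lam (w (x - y)), ha0 y])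
      _ = lam := by rw [integral_const_mul, ha1, mul_one]
      _ ≤ (1 + δ) * lam := by nlinarith
  · rw [min_eq_right hx.le]
    have hxX : X ≤ |x| := by
      by_contra! h
      linarith [hw_anti x X (h.le.trans (le_abs_self X))]
    calc ∫ y, a y * min lam (w (x - y)) ≤ (1 + δ / 2 + 2 * C * ε) * w x :=
          integral_mul_min_le ha ha0 ha1 hw (fun z => (hw0 z).le) hlam0.le (by positivity)
            (ha_le x) (hw_le x) (fun y hy => hX x y hxX hy) hR hsmall
      _ = (1 + δ) * w x := by
        have hCε : 2 * C * ε = δ / 2 := by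
          simp only [ε]
          field_simp
          ring
        rw [hCε]
        ring

theorem rpow_neg_le_mul_rpow_neg {u v c β : ℝ} (hu : 0 < u) (hc : 0 < c) (hβ : 0 ≤ β)
    (h : u ≤ c * v) : v ^ (-β) ≤ c ^ β * u ^ (-β) :=
  calc v ^ (-β) ≤ (u / c) ^ (-β) :=
        rpow_le_rpow_of_nonpos (by positivity) ((div_le_iff₀' hc).mpr h) (by linarith)
    _ = c ^ β * u ^ (-β) := by
        rw [div_rpow hu.le hc.le, rpow_neg hc.le, div_inv_eq_mul, mul_comm]

theorem one_add_sq_le_mul_one_add_sub_sq {η R x y : ℝ} (hη : 0 < η) (hx : 4 * R ≤ |x|)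
    (hxη : 4 * R ≤ η * |x|) (hy : |y| ≤ R) : 1 + x ^ 2 ≤ (1 + η) * (1 + (x - y) ^ 2) := by
  have hR : 0 ≤ R := (abs_nonneg y).trans hy
  have hxy : (|x| - R) ^ 2 ≤ (x - y) ^ 2 := by
    rw [← sq_abs (x - y)]
    exact pow_le_pow_left₀ (by linarith) (by linarith [abs_sub_abs_le_abs_sub x y]) 2
  rw [← sq_abs x]
  nlinarith [mul_le_mul_of_nonneg_left hxy hη.le,
    mul_nonneg (sub_nonneg.mpr hxη) (by linarith : (0 : ℝ) ≤ |x| - 2 * R),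
    mul_nonneg hR (sub_nonneg.mpr hx), mul_nonneg hη.le (sq_nonneg R)]

noncomputable def powerKernel (c β x : ℝ) : ℝ := c * (1 + x ^ 2) ^ (-β)

namespace powerKernel

variable {c β : ℝ}

theorem pos (hc : 0 < c) (x : ℝ) : 0 < powerKernel c β x := by
  unfold powerKernel
  positivity

theorem integrable (hβ : 1 / 2 < β) : Integrable (powerKernel c β) := by
  have h := integrable_rpow_neg_one_add_norm_sq (E := ℝ) (μ := volume) (r := 2 * β)
    (by simp only [Module.finrank_self, Nat.cast_one]; linarith)
  refine (h.const_mul c).congr (.of_forall fun x => ?_)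
  simp only [powerKernel, norm_eq_abs, sq_abs]
  ring_nf

theorem le_rpow_mul_of_one_add_sq_le_mul (hc : 0 ≤ c) (hβ : 0 ≤ β) {x z K : ℝ} (hK : 0 < K)
    (h : 1 + x ^ 2 ≤ K * (1 + z ^ 2)) : powerKernel c β z ≤ K ^ β * powerKernel c β x := by
  unfold powerKernel
  rw [mul_left_comm]
  exact mul_le_mul_of_nonneg_left (rpow_neg_le_mul_rpow_neg (by positivity) hK hβ h) hc

theorem le_of_abs_le (hc : 0 ≤ c) (hβ : 0 ≤ β) {x z : ℝ} (h : |x| ≤ |z|) :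
    powerKernel c β z ≤ powerKernel c β x := by
  simpa using le_rpow_mul_of_one_add_sq_le_mul hc hβ one_pos (by nlinarith [sq_le_sq.mpr h])

theorem le_of_abs_le_two_mul (hc : 0 ≤ c) (hβ : 0 ≤ β) {x z : ℝ} (h : |x| ≤ 2 * |z|) :
    powerKernel c β z ≤ 4 ^ β * powerKernel c β x := by
  refine le_rpow_mul_of_one_add_sq_le_mul hc hβ four_pos ?_
  have : x ^ 2 ≤ (2 * z) ^ 2 := sq_le_sq.mpr (by rwa [abs_mul, abs_two])
  nlinarith

theorem exists_forall_sub_le (hc : 0 ≤ c) (hβ : 0 ≤ β) {η : ℝ} (hη : 0 < η) (R : ℝ) :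
    ∃ X, ∀ x y, X ≤ |x| → |y| ≤ R → powerKernel c β (x - y) ≤ (1 + η) * powerKernel c β x := by
  have hcont : Tendsto (fun t : ℝ => (1 + t) ^ β) (𝓝 0) (𝓝 1) := by
    simpa using ((continuous_const_add (1 : ℝ)).rpow_const fun _ => Or.inr hβ).tendsto 0
  obtain ⟨η', hη'le, hη'0 : 0 < η'⟩ :=
    ((hcont.eventually (eventually_le_nhds (by linarith : (1 : ℝ) < 1 + η))).filter_mono
      nhdsWithin_le_nhds |>.and (self_mem_nhdsWithin (s := Ioi (0 : ℝ)) (a := 0))).exists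
  refine ⟨max (4 * R) (4 * R / η'), fun x y hx hy => ?_⟩
  have hxη : 4 * R ≤ η' * |x| := by
    rw [← div_le_iff₀' hη'0]
    exact (le_max_right _ _).trans hx
  calc powerKernel c β (x - y) ≤ (1 + η') ^ β * powerKernel c β x :=
        le_rpow_mul_of_one_add_sq_le_mul hc hβ (by linarith)
          (one_add_sq_le_mul_one_add_sub_sq hη'0 ((le_max_left _ _).trans hx) hxη hy)
    _ ≤ (1 + η) * powerKernel c β x :=
        mul_le_mul_of_nonneg_right hη'le (mul_nonneg hc (by positivity))

theorem rpow (hc : 0 ≤ c) (γ x : ℝ) : powerKernel c β x ^ γ = powerKernel (c ^ γ) (β * γ) x := by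
  unfold powerKernel
  rw [mul_rpow hc (by positivity), ← rpow_mul (by positivity), neg_mul]

theorem le_rpow_mul (hc : 0 < c) (hβ : 0 ≤ β) {γ : ℝ} (hγ : γ ≤ 1) (x : ℝ) :
    powerKernel c β x ≤ c ^ (1 - γ) * powerKernel c β x ^ γ := by
  have hle : powerKernel c β x ≤ c := by
    simpa [powerKernel] using le_of_abs_le hc.le hβ (x := 0) (z := x) (by simp)
  calc powerKernel c β x = powerKernel c β x ^ (1 - γ) * powerKernel c β x ^ γ := by
        rw [← rpow_add (pos hc x), sub_add_cancel, rpow_one]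
    _ ≤ c ^ (1 - γ) * powerKernel c β x ^ γ := by
        have h0 := (pos (β := β) hc x).le
        exact mul_le_mul_of_nonneg_right (rpow_le_rpow h0 hle (by linarith)) (rpow_nonneg h0 _)

theorem le_mul_rpow_of_abs_le_two_mul (hc : 0 < c) (hβ : 0 ≤ β) {γ : ℝ} (hγ : γ ≤ 1) {x z : ℝ}
    (h : |x| ≤ 2 * |z|) : powerKernel c β z ≤ 4 ^ β * c ^ (1 - γ) * powerKernel c β x ^ γ :=
  calc powerKernel c β z ≤ 4 ^ β * powerKernel c β x := le_of_abs_le_two_mul hc.le hβ h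
    _ ≤ 4 ^ β * (c ^ (1 - γ) * powerKernel c β x ^ γ) := by
        gcongr
        exact le_rpow_mul hc hβ hγ x
    _ = 4 ^ β * c ^ (1 - γ) * powerKernel c β x ^ γ := by ring

end powerKernel

/-- for every `δ ∈ (0,1)` there is `λ > 0` such that
`a * ω_λ ≤ (1+δ) ω_λ` where `ω_λ = min{λ, a^γ}`. -/
theorem stmt_11
    (α cα : ℝ) (hα : 1 / 2 < α) (hcα : 0 < cα)
    (a : ℝ → ℝ) (ha : ∀ x : ℝ, a x = cα * (1 + |x| ^ 2) ^ (-α))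
    (hnorm : ∫ x : ℝ, a x = 1)
    (γ : ℝ) (hγ : γ ∈ Ioo (1 / (2 * α)) 1) :
    ∀ δ : ℝ, δ ∈ Ioo (0 : ℝ) 1 → ∃ lam > (0 : ℝ),
      ∀ x : ℝ, (∫ y : ℝ, a y * min lam ((a (x - y)) ^ γ)) ≤
        (1 + δ) * min lam ((a x) ^ γ) := by
  intro δ hδ
  obtain rfl : a = powerKernel cα α := funext fun x => by rw [ha, powerKernel, sq_abs]
  have hα0 : 0 ≤ α := by linarith
  have hαγ : 1 / 2 < α * γ := by
    have := (div_lt_iff₀ (by positivity : (0 : ℝ) < 2 * α)).mp hγ.1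
    linarith
  have hcαγ : 0 < cα ^ γ := by positivity
  have hw0 : ∀ x, 0 ≤ powerKernel (cα ^ γ) (α * γ) x := fun x => (powerKernel.pos hcαγ x).le
  simp_rw [powerKernel.rpow hcα.le γ]
  refine exists_integral_mul_min_le (C := max (4 ^ α * cα ^ (1 - γ)) (4 ^ (α * γ)))
    (powerKernel.integrable hα) (fun y => (powerKernel.pos hcα y).le) hnorm
    (powerKernel.integrable hαγ) (powerKernel.pos hcαγ)
    (fun _ _ => powerKernel.le_of_abs_le hcαγ.le (by positivity))
    (fun x z hxz => ?_) (fun x z hxz => ?_)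
    (fun _ hη => powerKernel.exists_forall_sub_le hcαγ.le (by positivity) hη) hδ.1
  · calc powerKernel cα α z ≤ 4 ^ α * cα ^ (1 - γ) * powerKernel (cα ^ γ) (α * γ) x := by
          rw [← powerKernel.rpow hcα.le]
          exact powerKernel.le_mul_rpow_of_abs_le_two_mul hcα hα0 hγ.2.le hxz
      _ ≤ _ := mul_le_mul_of_nonneg_right (le_max_left _ _) (hw0 x)
  · exact (powerKernel.le_of_abs_le_two_mul hcαγ.le (by positivity) hxz).trans
      (mul_le_mul_of_nonneg_right (le_max_right _ _) (hw0 x))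
end
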